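/- arXiv:2604.07632 — 2 statements merged into one kernel-verified Lean document; each statement's English description precedes it below -/
import Mathlib

section
/- If f: ℝ → ℝ is continuous piecewise linear with at most m linear pieces and g: ℝ → ℝ is continuous piecewise linear with at most k linear pieces, then the composition g ∘ f is continuous piecewise linear with at most m·k linear pieces. -/
/-!
On each of the at most `m` gaps between breakpoints of `f`, the function `f` is affine, so
`g ∘ f` can only break where `f` crosses a breakpoint of `g`; a nonconstant affine map crosses
each of the at most `k - 1` breakpoints of `g` once. The `m - 1` breakpoints of `f` and at most
`m (k - 1)` crossings leave at most `(m - 1) + m (k - 1) + 1 = m k` pieces.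
-/

/-- `f` agrees with an affine function on the set `S`. -/
def AffineOnSet (f : ℝ → ℝ) (S : Set ℝ) : Prop :=
  ∃ a b : ℝ, ∀ x ∈ S, f x = a * x + b

/-- `f` is continuous piecewise linear with breakpoints contained in the finite set `s`. -/
def CPWL (f : ℝ → ℝ) (s : Finset ℝ) : Prop :=
  Continuous f ∧ ∀ u v : ℝ, (∀ t ∈ Set.Ioo u v, t ∉ s) → AffineOnSet f (Set.Ioo u v)

/-- `f` is continuous piecewise linear with at most `m` linear pieces
(i.e. at most `m - 1` breakpoints). -/
def PiecesLe (f : ℝ → ℝ) (m : ℕ) : Prop :=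
  ∃ s : Finset ℝ, s.card + 1 ≤ m ∧ CPWL f s

open Set Filter Topology

section MaxBelow

variable {α : Type*} [LinearOrder α]

/-- Labels the gap of `s` containing `x`: points of one gap share it. -/
def maxBelow (s : Finset α) (x : α) : WithBot α :=
  (s.filter (· < x)).max

lemma maxBelow_mem_insert_bot_image (s : Finset α) (x : α) :
    maxBelow s x ∈ insert ⊥ (s.image ((↑) : α → WithBot α)) := by
  rcases h : maxBelow s x with _ | p
  · exact Finset.mem_insert_self _ _
  · have hp := (Finset.mem_filter.1 (Finset.mem_of_max h)).1
    exact Finset.mem_insert_of_mem (Finset.mem_image_of_mem _ hp)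

lemma notMem_Ioo_of_maxBelow_eq {s : Finset α} {x y p : α}
    (h : maxBelow s x = maxBelow s y) (hp : p ∈ s) : p ∉ Ioo x y := by
  rintro ⟨hxp, hpy⟩
  have hle : (p : WithBot α) ≤ maxBelow s x :=
    h ▸ Finset.le_max (Finset.mem_filter.2 ⟨hp, hpy⟩)
  have hlt : maxBelow s x < p :=
    (Finset.max_le fun q hq => WithBot.coe_le_coe.2 (Finset.mem_filter.1 hq).2.le).trans_lt
      (WithBot.coe_lt_coe.2 hxp)
  exact hle.not_gt hlt

end MaxBelow

lemma image_affine_Ioo_eq_uIoo {K : Type*} [Field K] [LinearOrder K] [IsStrictOrderedRing K]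
    {a : K} (ha : a ≠ 0) (b : K) {u v : K} (huv : u ≤ v) :
    (a * · + b) '' Ioo u v = uIoo (a * u + b) (a * v + b) := by
  rcases ha.lt_or_gt with hneg | hpos
  · have hcomp : (a * · + b) = (-a * · + b) ∘ Neg.neg := by ext; simp
    rw [hcomp, image_comp, image_neg_Ioo, image_affine_Ioo (neg_pos.2 hneg),
      uIoo_of_ge (by nlinarith)]
    simp
  · rw [image_affine_Ioo hpos, uIoo_of_le (by nlinarith)]

namespace AffineOnSet

lemma comp {f g : ℝ → ℝ} {S T : Set ℝ} (hg : AffineOnSet g T) (hf : AffineOnSet f S)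
    (hST : MapsTo f S T) : AffineOnSet (g ∘ f) S := by
  obtain ⟨c, d, hcd⟩ := hg
  obtain ⟨a, b, hab⟩ := hf
  exact ⟨c * a, c * b + d, fun x hx => by
    rw [Function.comp_apply, hcd _ (hST hx), hab x hx]; ring⟩

end AffineOnSet

lemma eqOn_Icc_of_eqOn_Ioo {f g : ℝ → ℝ} (hf : Continuous f) (hg : Continuous g) {u v : ℝ}
    (huv : u < v) (h : EqOn f g (Ioo u v)) : EqOn f g (Icc u v) := by
  simpa only [closure_Ioo huv.ne] using h.closure hf hg

lemma not_eventually_eq_nhdsGT_of_eqOn_affine {f : ℝ → ℝ} {a b u v x : ℝ} (ha : a ≠ 0)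
    (hf : EqOn f (a * · + b) (Ioo u v)) (hx : x ∈ Ioo u v) :
    ¬ ∀ᶠ z in 𝓝[>] x, f z = f x := by
  intro h
  obtain ⟨z, hfz, hz⟩ := (h.and (Ioo_mem_nhdsGT hx.2)).exists
  have hzx : a * z + b = a * x + b := (hf ⟨hx.1.trans hz.1, hz.2⟩).symm.trans (hfz.trans (hf hx))
  exact hz.1.ne' (mul_left_cancel₀ ha (add_right_cancel hzx))

/-- Points where `f` is constant to the right are excluded: away from the breakpoints of `f`
they are points where `f` is locally constant, and keeping them could make the set infinite. -/
def crossings (f : ℝ → ℝ) (t : Finset ℝ) : Set ℝ :=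
  {x | f x ∈ t ∧ ¬ ∀ᶠ z in 𝓝[>] x, f z = f x}

namespace CPWL

variable {f g : ℝ → ℝ} {s t : Finset ℝ}

lemma eventually_eq_of_maxBelow_eq (hf : CPWL f s) {x y : ℝ} (hxy : x < y)
    (hL : maxBelow s x = maxBelow s y) (hfxy : f x = f y) : ∀ᶠ z in 𝓝[>] x, f z = f x := by
  obtain ⟨a, b, hab⟩ := hf.2 x y fun p hp hps => notMem_Ioo_of_maxBelow_eq hL hps hp
  have hIcc : EqOn f (a * · + b) (Icc x y) := eqOn_Icc_of_eqOn_Ioo hf.1 (by fun_prop) hxy hab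
  have hx := hIcc (left_mem_Icc.2 hxy.le)
  have hy := hIcc (right_mem_Icc.2 hxy.le)
  have ha : a = 0 := by
    by_contra ha
    exact hxy.ne (mul_left_cancel₀ ha (add_right_cancel (hx.symm.trans (hfxy.trans hy))))
  filter_upwards [Ioc_mem_nhdsGT hxy] with z hz
  rw [hIcc ⟨hz.1.le, hz.2⟩, hx, ha]
  ring

lemma injOn_crossings (hf : CPWL f s) (t : Finset ℝ) :
    InjOn (fun x => (maxBelow s x, f x)) (crossings f t) := by
  intro x hx y hy hxy
  simp only [Prod.mk.injEq] at hxy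
  by_contra hne
  rcases lt_or_gt_of_ne hne with h | h
  · exact hx.2 (hf.eventually_eq_of_maxBelow_eq h hxy.1 hxy.2)
  · exact hy.2 (hf.eventually_eq_of_maxBelow_eq h hxy.1.symm hxy.2.symm)

lemma mapsTo_crossings (s t : Finset ℝ) :
    MapsTo (fun x => (maxBelow s x, f x)) (crossings f t)
      ↑(insert ⊥ (s.image ((↑) : ℝ → WithBot ℝ)) ×ˢ t) := fun x hx =>
  Finset.mem_product.2 ⟨maxBelow_mem_insert_bot_image s x, hx.1⟩

lemma crossings_finite (hf : CPWL f s) (t : Finset ℝ) : (crossings f t).Finite :=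
  Finite.of_injOn (mapsTo_crossings s t) (hf.injOn_crossings t) (Finset.finite_toSet _)

lemma ncard_crossings_le (hf : CPWL f s) (t : Finset ℝ) :
    (crossings f t).ncard ≤ (s.card + 1) * t.card := by
  refine (ncard_le_ncard_of_injOn _ (mapsTo_crossings s t) (hf.injOn_crossings t)
    (Finset.finite_toSet _)).trans ?_
  rw [ncard_coe_finset, Finset.card_product]
  gcongr
  exact (Finset.card_insert_le _ _).trans (Nat.add_le_add_right Finset.card_image_le 1)

lemma comp (hf : CPWL f s) (hg : CPWL g t) {r : Finset ℝ} (hr : crossings f t ⊆ r) :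
    CPWL (g ∘ f) (s ∪ r) := by
  refine ⟨hg.1.comp hf.1, fun u v hgap => ?_⟩
  rcases le_or_gt v u with hvu | huv
  · exact ⟨0, 0, by simp [Ioo_eq_empty_of_le hvu]⟩
  obtain ⟨a, b, hab⟩ := hf.2 u v fun x hx hxs => hgap x hx (Finset.mem_union_left _ hxs)
  rcases eq_or_ne a 0 with rfl | ha
  · exact ⟨0, g b, fun x hx => by simp [hab x hx]⟩
  have himage : f '' Ioo u v = uIoo (a * u + b) (a * v + b) :=
    (EqOn.image_eq (f₂ := (a * · + b)) hab).trans (image_affine_Ioo_eq_uIoo ha b huv.le)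
  have hgap' : ∀ y ∈ uIoo (a * u + b) (a * v + b), y ∉ t := by
    rintro y hy hyt
    obtain ⟨x, hx, rfl⟩ := himage ▸ hy
    exact hgap x hx (Finset.mem_union_right _
      (hr ⟨hyt, not_eventually_eq_nhdsGT_of_eqOn_affine ha hab hx⟩))
  exact (hg.2 _ _ hgap').comp ⟨a, b, hab⟩ ((mapsTo_image f _).mono_right himage.subset)

end CPWL

/-- If `f` is continuous piecewise linear with at most `m` pieces and `g` with at most `k`
pieces, then `g ∘ f` is continuous piecewise linear with at most `m * k` pieces. -/
theorem comp_piecesLe (f g : ℝ → ℝ) (m k : ℕ)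
    (hf : PiecesLe f m) (hg : PiecesLe g k) :
    PiecesLe (g ∘ f) (m * k) := by
  obtain ⟨s, hsm, hf⟩ := hf
  obtain ⟨t, htk, hg⟩ := hg
  have hfin := hf.crossings_finite t
  refine ⟨s ∪ hfin.toFinset, ?_, hf.comp hg (by simp)⟩
  have hunion := Finset.card_union_le s hfin.toFinset
  have hcross := hf.ncard_crossings_le t
  rw [ncard_eq_toFinset_card _ hfin] at hcross
  calc (s ∪ hfin.toFinset).card + 1 ≤ s.card + (s.card + 1) * t.card + 1 := by omega
    _ = (s.card + 1) * (t.card + 1) := by ring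
    _ ≤ m * k := Nat.mul_le_mul hsm htk
end

section
/- For every w ≥ 1 there exist continuous piecewise-linear functions g, h: ℝ → ℝ, each realizable by a one-hidden-layer ReLU network of width at most O(w), such that the composition h ∘ g has at least w² distinct breakpoints on [0,1]. -/
open Finset

/-- `x` is a breakpoint of `f`: `f` is not affine on any neighborhood of `x`. -/
def IsBreakpoint (f : ℝ → ℝ) (x : ℝ) : Prop :=
  ∀ ε : ℝ, 0 < ε → ¬ AffineOnSet f (Set.Ioo (x - ε) (x + ε))

/-- One-hidden-layer ReLU network of width `w` on `ℝ`. -/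
def ReLUNet (w : ℕ) (a b c : ℕ → ℝ) (d : ℝ) (x : ℝ) : ℝ :=
  (∑ j ∈ Finset.range w, a j * max (b j * x + c j) 0) + d

/-- `f` is exactly realizable by a one-hidden-layer ReLU network of width `w`. -/
def RealizableReLU (w : ℕ) (f : ℝ → ℝ) : Prop :=
  ∃ a b c : ℕ → ℝ, ∃ d : ℝ, ∀ x, f x = ReLUNet w a b c d x

/-!
On `[0,1]` the sawtooth with `w` teeth is `x ↦ T (w x)`, where `T v = 2 dist(v, ℤ)` is the
triangle wave, and it takes values in `[0,1]`. Since `T u = ± 2 (u - n)` for an integer `n`, and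
`T` is even and `1`-periodic, `T (w T u) = T (2 w u)`; hence the sawtooth composed with itself is
`x ↦ T (2 w² x)` on `[0,1]`, a sawtooth with `2 w²` teeth. Near each `i / (2 w²)` it is a
multiple of `|x - i / (2 w²)|`, so each of these points is a breakpoint.
-/

namespace RealizableReLU

theorem zero : RealizableReLU 0 0 :=
  ⟨0, 0, 0, 0, fun x => by simp [ReLUNet]⟩

theorem add {m n : ℕ} {f g : ℝ → ℝ} (hf : RealizableReLU m f) (hg : RealizableReLU n g) :
    RealizableReLU (m + n) (f + g) := by
  obtain ⟨a, b, c, d, hf⟩ := hf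
  obtain ⟨a', b', c', d', hg⟩ := hg
  let glue (u v : ℕ → ℝ) (j : ℕ) : ℝ := if j < m then u j else v (j - m)
  refine ⟨glue a a', glue b b', glue c c', d + d', fun x => ?_⟩
  have hlow : ∑ j ∈ range m, glue a a' j * max (glue b b' j * x + glue c c' j) 0 =
      ∑ j ∈ range m, a j * max (b j * x + c j) 0 :=
    sum_congr rfl fun j hj => by simp [glue, mem_range.mp hj]
  have hhigh : ∑ j ∈ range n,
      glue a a' (m + j) * max (glue b b' (m + j) * x + glue c c' (m + j)) 0 =
      ∑ j ∈ range n, a' j * max (b' j * x + c' j) 0 :=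
    sum_congr rfl fun j _ => by simp [glue]
  simp only [ReLUNet, Pi.add_apply, hf, hg, sum_range_add, hlow, hhigh]
  ring

theorem comp_affine {n : ℕ} {f : ℝ → ℝ} (hf : RealizableReLU n f) (α β : ℝ) :
    RealizableReLU n (fun x => f (α * x + β)) := by
  obtain ⟨a, b, c, d, hf⟩ := hf
  refine ⟨a, fun j => b j * α, fun j => b j * β + c j, d, fun x => ?_⟩
  simp only [hf, ReLUNet]
  congr 1
  refine sum_congr rfl fun j _ => ?_
  ring_nf

theorem sum_range {m n : ℕ} {f : ℕ → ℝ → ℝ} (hf : ∀ k < n, RealizableReLU m (f k)) :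
    RealizableReLU (n * m) (fun x => ∑ k ∈ range n, f k x) := by
  induction n with
  | zero =>
    simp only [range_zero, sum_empty, zero_mul]
    exact zero
  | succ n ih =>
    rw [Nat.succ_mul]
    simp only [sum_range_succ]
    exact (ih fun k hk => hf k (by omega)).add (hf n (by omega))

end RealizableReLU

noncomputable def hat (t : ℝ) : ℝ := max (1 - |t|) 0

theorem hat_eq_relu (t : ℝ) : hat t = max (t + 1) 0 - 2 * max t 0 + max (t - 1) 0 := by
  simp only [hat, max_def]
  split_ifs <;> cases abs_cases t <;> linarith

theorem realizableReLU_hat : RealizableReLU 3 hat :=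
  ⟨fun j => if j = 1 then -2 else 1, 1, fun j => 1 - j, 0, fun t => by
    norm_num [ReLUNet, sum_range_succ, hat_eq_relu]
    ring_nf⟩

theorem hat_eq_zero {t : ℝ} (ht : 1 ≤ |t|) : hat t = 0 :=
  max_eq_right (by linarith)

noncomputable def triangleWave (v : ℝ) : ℝ := 2 * |v - round v|

theorem triangleWave_nonneg (v : ℝ) : 0 ≤ triangleWave v := by
  unfold triangleWave; positivity

theorem triangleWave_le_one (v : ℝ) : triangleWave v ≤ 1 := by
  have := abs_sub_round v
  unfold triangleWave; linarith

theorem triangleWave_eq_of_abs_sub_le {v : ℝ} (m : ℤ) (hm : |v - m| ≤ 1 / 2) :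
    triangleWave v = 2 * |v - m| := by
  suffices |v - m| ≤ |v - round v| from by
    rw [triangleWave, le_antisymm (round_le v m) this]
  by_cases hr : round v = m
  · rw [hr]
  -- two distinct integers are at distance at least `1`, so `v` is a midpoint between them
  have hdist : (1 : ℝ) ≤ |(round v : ℝ) - m| := by
    exact_mod_cast Int.one_le_abs (sub_ne_zero.mpr hr)
  have := abs_sub_le (round v : ℝ) v m
  have := abs_sub_comm (round v : ℝ) v
  linarith

theorem triangleWave_intCast (n : ℤ) : triangleWave n = 0 := by
  simp [triangleWave_eq_of_abs_sub_le n]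

theorem triangleWave_neg (v : ℝ) : triangleWave (-v) = triangleWave v := by
  have h : |-v - ((-round v : ℤ) : ℝ)| = |v - round v| := by
    rw [← abs_neg]; push_cast; ring_nf
  rw [triangleWave_eq_of_abs_sub_le _ (h ▸ abs_sub_round v), h, triangleWave]

theorem triangleWave_add_intCast (v : ℝ) (n : ℤ) : triangleWave (v + n) = triangleWave v := by
  simp [triangleWave, round_add_intCast]

theorem triangleWave_intCast_mul_triangleWave (n : ℤ) (u : ℝ) :
    triangleWave (n * triangleWave u) = triangleWave (2 * n * u) := by
  have hshift : 2 * n * u = 2 * n * (u - round u) + ((2 * n * round u : ℤ) : ℝ) := by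
    push_cast; ring
  rw [hshift, triangleWave_add_intCast, show triangleWave u = 2 * |u - round u| from rfl]
  rcases abs_choice (u - round u) with h | h <;> rw [h]
  · ring_nf
  · rw [← triangleWave_neg]; ring_nf

theorem hat_eq_triangleWave {k : ℤ} {v : ℝ} (hv : v ∈ Set.Icc (k : ℝ) (k + 1)) :
    hat (2 * v - (2 * k + 1)) = triangleWave v := by
  obtain ⟨hk, hk1⟩ := hv
  rcases le_total v (k + 1 / 2) with hmid | hmid
  · rw [triangleWave_eq_of_abs_sub_le k (by rw [abs_le]; constructor <;> linarith), hat,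
      abs_of_nonpos (by linarith), abs_of_nonneg (by linarith), max_eq_left (by linarith)]
    ring
  · rw [triangleWave_eq_of_abs_sub_le (k + 1)
        (by push_cast; rw [abs_le]; constructor <;> linarith), hat,
      abs_of_nonneg (by linarith), abs_of_nonpos (by push_cast; linarith),
      max_eq_left (by linarith)]
    push_cast; ring

theorem hat_eq_zero_of_notMem_Ioo {j : ℕ} {v : ℝ} (hv : v ∉ Set.Ioo (j : ℝ) (j + 1)) :
    hat (2 * v - (2 * j + 1)) = 0 := by
  refine hat_eq_zero ?_
  rw [Set.mem_Ioo, not_and_or, not_lt, not_lt] at hv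
  rw [le_abs]
  rcases hv with hv | hv
  · right; linarith
  · left; linarith

theorem sum_hat_eq_triangleWave {n : ℕ} {v : ℝ} (hv : v ∈ Set.Icc (0 : ℝ) n) :
    ∑ k ∈ range n, hat (2 * v - (2 * k + 1)) = triangleWave v := by
  obtain ⟨hv0, hvn⟩ := hv
  rcases hvn.lt_or_eq with hlt | rfl
  · have hfloor := Nat.floor_le hv0
    have hfloor1 := Nat.lt_floor_add_one v
    rw [sum_eq_single_of_mem ⌊v⌋₊ (mem_range.mpr ((Nat.floor_lt hv0).mpr hlt))]
    · exact_mod_cast hat_eq_triangleWave (k := ⌊v⌋₊) ⟨hfloor, hfloor1.le⟩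
    · intro j _ hj
      refine hat_eq_zero_of_notMem_Ioo fun ⟨hj0, hj1⟩ => hj ?_
      rw [eq_comm, Nat.floor_eq_iff hv0]
      exact ⟨hj0.le, hj1⟩
  · rw [show triangleWave n = 0 by simpa using triangleWave_intCast n]
    refine sum_eq_zero fun j hj => hat_eq_zero_of_notMem_Ioo fun ⟨_, hj1⟩ => ?_
    have : (j : ℝ) + 1 ≤ n := by exact_mod_cast mem_range.mp hj
    linarith

noncomputable def sawtooth (w : ℕ) (x : ℝ) : ℝ :=
  ∑ k ∈ range w, hat (2 * w * x - (2 * k + 1))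

theorem realizableReLU_sawtooth (w : ℕ) : RealizableReLU (w * 3) (sawtooth w) :=
  RealizableReLU.sum_range fun k _ => by
    simpa [sub_eq_add_neg] using realizableReLU_hat.comp_affine (2 * w) (-(2 * k + 1))

theorem sawtooth_eq_triangleWave {w : ℕ} {x : ℝ} (hx : x ∈ Set.Icc (0 : ℝ) 1) :
    sawtooth w x = triangleWave (w * x) := by
  obtain ⟨hx0, hx1⟩ := hx
  rw [← sum_hat_eq_triangleWave ⟨by positivity, mul_le_of_le_one_right (by positivity) hx1⟩]
  simp only [sawtooth, mul_assoc]

theorem sawtooth_comp_sawtooth {w : ℕ} {x : ℝ} (hx : x ∈ Set.Icc (0 : ℝ) 1) :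
    sawtooth w (sawtooth w x) = triangleWave (2 * w ^ 2 * x) := by
  have hg : sawtooth w x ∈ Set.Icc (0 : ℝ) 1 := by
    rw [sawtooth_eq_triangleWave hx]
    exact ⟨triangleWave_nonneg _, triangleWave_le_one _⟩
  rw [sawtooth_eq_triangleWave hg, sawtooth_eq_triangleWave hx, ← Int.cast_natCast,
    triangleWave_intCast_mul_triangleWave]
  push_cast; ring_nf

theorem isBreakpoint_of_eq_mul_abs {f : ℝ → ℝ} {q c δ : ℝ} (hc : c ≠ 0) (hδ : 0 < δ)
    (hf : ∀ y, |y - q| < δ → f y = c * |y - q|) : IsBreakpoint f q := by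
  rintro ε hε ⟨a, b, hab⟩
  obtain ⟨t, ht, htε, htδ⟩ : ∃ t, 0 < t ∧ t < ε ∧ t < δ :=
    ⟨min ε δ / 2, by positivity, by linarith [min_le_left ε δ],
      by linarith [min_le_right ε δ]⟩
  have hq := hab q ⟨by linarith, by linarith⟩
  have hplus := hab (q + t) ⟨by linarith, by linarith⟩
  have hminus := hab (q - t) ⟨by linarith, by linarith⟩
  rw [hf q (by simpa using hδ)] at hq
  rw [hf (q + t) (by simpa [abs_of_pos ht] using htδ)] at hplus
  rw [hf (q - t) (by simpa [abs_of_pos ht] using htδ)] at hminus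
  simp only [sub_self, abs_zero, add_sub_cancel_left, sub_sub_cancel_left, abs_neg,
    abs_of_pos ht] at hq hplus hminus
  -- an affine function satisfies `f (q - t) + f (q + t) = 2 f q`, while `c |y - q|` does not
  exact hc (by nlinarith)

theorem isBreakpoint_sawtooth_comp_sawtooth {w i : ℕ} (hi0 : 0 < i) (hi : i < 2 * w ^ 2) :
    IsBreakpoint (sawtooth w ∘ sawtooth w) (i / (2 * w ^ 2)) := by
  set N : ℝ := 2 * w ^ 2 with hNdef
  have hi0' : (1 : ℝ) ≤ i := by exact_mod_cast hi0
  have hi' : (i : ℝ) + 1 ≤ N := by simp only [N]; exact_mod_cast hi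
  have hN : 0 < N := by linarith
  refine isBreakpoint_of_eq_mul_abs (c := 2 * N) (δ := 1 / (2 * N)) (by positivity) (by positivity)
    fun y hy => ?_
  have hscale : N * y - i = N * (y - i / N) := by field_simp
  have hNy : |N * y - i| < 1 / 2 := by
    rw [hscale, abs_mul, abs_of_pos hN]
    calc N * |y - i / N| < N * (1 / (2 * N)) := by gcongr
      _ = 1 / 2 := by field_simp
  have hy01 : y ∈ Set.Icc (0 : ℝ) 1 := by
    rw [abs_lt] at hNy
    constructor <;> nlinarith
  rw [Function.comp_apply, sawtooth_comp_sawtooth hy01, ← hNdef,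
    triangleWave_eq_of_abs_sub_le (i : ℤ) (by rw [Int.cast_natCast]; exact hNy.le),
    Int.cast_natCast, hscale, abs_mul, abs_of_pos hN]
  ring

/-- For every `w ≥ 1` there are continuous piecewise-linear `g, h`, each realizable by a
one-hidden-layer ReLU network of width `O(w)`, such that `h ∘ g` has at least `w²` distinct
breakpoints in `[0,1]`. -/
theorem exists_bridge_with_many_breakpoints :
    ∃ C : ℕ, ∀ w : ℕ, 1 ≤ w → ∃ g h : ℝ → ℝ,
      (∃ W : ℕ, W ≤ C * w ∧ RealizableReLU W g) ∧
      (∃ W : ℕ, W ≤ C * w ∧ RealizableReLU W h) ∧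
      (∃ S : Finset ℝ, w ^ 2 ≤ S.card ∧ (↑S : Set ℝ) ⊆ Set.Icc (0 : ℝ) 1 ∧
        ∀ x ∈ S, IsBreakpoint (h ∘ g) x) := by
  refine ⟨3, fun w hw => ⟨sawtooth w, sawtooth w, ⟨w * 3, by rw [mul_comm],
    realizableReLU_sawtooth w⟩, ⟨w * 3, by rw [mul_comm], realizableReLU_sawtooth w⟩, ?_⟩⟩
  have hN : (0 : ℝ) < 2 * w ^ 2 := by positivity
  have hinj : Function.Injective fun i : ℕ => (i : ℝ) / (2 * w ^ 2) := fun i j hij => by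
    simpa [div_left_inj' hN.ne'] using hij
  refine ⟨(Icc 1 (w ^ 2)).image fun i : ℕ => (i : ℝ) / (2 * w ^ 2), ?_, ?_, ?_⟩
  · rw [card_image_of_injective _ hinj, Nat.card_Icc]
    omega
  · intro x hx
    simp only [coe_image, coe_Icc, Set.mem_image, Set.mem_Icc] at hx
    obtain ⟨i, ⟨-, hi⟩, rfl⟩ := hx
    have hi' : (i : ℝ) ≤ 2 * w ^ 2 := by exact_mod_cast hi.trans (by omega)
    exact ⟨by positivity, (div_le_one hN).mpr hi'⟩
  · simp only [mem_image, mem_Icc]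
    rintro _ ⟨i, ⟨hi0, hi⟩, rfl⟩
    exact isBreakpoint_sawtooth_comp_sawtooth hi0 (by nlinarith)
end
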